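/- arXiv:1705.07309 — 5 statements merged into one kernel-verified Lean document; each statement's English description precedes it below -/
import Mathlib

section
/- The cut rule is admissible in the infinitary Lambek calculus with positive iteration L⁺_ω: if the sequents Π → A and Γ, A, Δ → C are both derivable in L⁺_ω, then the sequent Γ, Π, Δ → C is derivable in L⁺_ω. -/
/-- Types (formulae) of the Lambek calculus with positive iteration:
primitive types, product `mul`, left division `ldiv A B = A \ B`,
right division `rdiv B A = B / A`, and positive iteration `plus A = A⁺`. -/
inductive Fm : Type where
  | pr : ℕ → Fm
  | mul : Fm → Fm → Fm
  | ldiv : Fm → Fm → Fm   -- `ldiv A B` is `A \ B`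
  | rdiv : Fm → Fm → Fm   -- `rdiv B A` is `B / A`
  | plus : Fm → Fm

/-- Derivability in the infinitary calculus L⁺_ω.  `DerLw P A` means the sequent
`P → A` is derivable.  Derivations are well-founded trees; the rule `plus_l`
is the ω-rule with infinitely many premises. -/
inductive DerLw : List Fm → Fm → Prop where
  | ax (A : Fm) : DerLw [A] A
  | ldiv_r {P : List Fm} {A B : Fm} (hne : P ≠ []) :
      DerLw (A :: P) B → DerLw P (Fm.ldiv A B)
  | ldiv_l {P Γ Δ : List Fm} {A B C : Fm} :
      DerLw P A → DerLw (Γ ++ B :: Δ) C →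
      DerLw (Γ ++ P ++ Fm.ldiv A B :: Δ) C
  | rdiv_r {P : List Fm} {A B : Fm} (hne : P ≠ []) :
      DerLw (P ++ [A]) B → DerLw P (Fm.rdiv B A)
  | rdiv_l {P Γ Δ : List Fm} {A B C : Fm} :
      DerLw P A → DerLw (Γ ++ B :: Δ) C →
      DerLw (Γ ++ Fm.rdiv B A :: (P ++ Δ)) C
  | mul_r {Γ Δ : List Fm} {A B : Fm} :
      DerLw Γ A → DerLw Δ B → DerLw (Γ ++ Δ) (Fm.mul A B)
  | mul_l {Γ Δ : List Fm} {A B C : Fm} :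
      DerLw (Γ ++ A :: B :: Δ) C → DerLw (Γ ++ Fm.mul A B :: Δ) C
  | plus_r {A : Fm} (Ps : List (List Fm)) (hne : Ps ≠ []) :
      (∀ P ∈ Ps, DerLw P A) → DerLw Ps.flatten (Fm.plus A)
  | plus_l {Γ Δ : List Fm} {A C : Fm} :
      (∀ n : ℕ, 1 ≤ n → DerLw (Γ ++ List.replicate n A ++ Δ) C) →
      DerLw (Γ ++ Fm.plus A :: Δ) C


/-!
Cut is eliminated by induction on the cut formula `A` and, for fixed `A`, by induction on the
derivation of `Γ, A, Δ → C`; derivations are well-founded trees, so the ω-rule causes no trouble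
there. If that derivation ends in a left rule whose principal formula is this occurrence of `A`,
a second induction, on the derivation of `Π → A`, pushes the cut past the left rules of `Π → A`
until `A` is introduced by a right rule or the axiom. The principal reductions then cut on the
immediate subformulas of `A`; for `A = B⁺` derived by `(→⁺)ₙ`, the ω-rule premise for this `n`
is cut against the `n` premises of `(→⁺)ₙ` one at a time.
-/

namespace List

variable {α : Type*}

theorem append_cons_eq_append_cases {a : α} {L₁ L₂ M N : List α}
    (h : L₁ ++ a :: L₂ = M ++ N) :
    (∃ T, M = L₁ ++ a :: T ∧ L₂ = T ++ N) ∨ (∃ T, L₁ = M ++ T ∧ N = T ++ a :: L₂) := by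
  rcases append_eq_append_iff.mp h with ⟨_ | ⟨x, T⟩, rfl, hN⟩ | hM
  · exact Or.inr ⟨[], by simp, hN.symm⟩
  · obtain ⟨rfl, rfl⟩ := cons_eq_cons.mp hN
    exact Or.inl ⟨T, rfl, rfl⟩
  · exact Or.inr hM

theorem append_cons_eq_append_cons_cases {a b : α} {L₁ L₂ M₁ M₂ : List α}
    (h : L₁ ++ a :: L₂ = M₁ ++ b :: M₂) :
    (L₁ = M₁ ∧ a = b ∧ L₂ = M₂) ∨
    (∃ T, M₁ = L₁ ++ a :: T ∧ L₂ = T ++ b :: M₂) ∨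
    (∃ T, L₁ = M₁ ++ b :: T ∧ M₂ = T ++ a :: L₂) := by
  rcases append_cons_eq_append_cases h with hM | ⟨_ | ⟨x, T⟩, rfl, hM⟩
  · exact Or.inr (Or.inl hM)
  · obtain ⟨rfl, rfl⟩ := cons_eq_cons.mp hM
    exact Or.inl ⟨by simp, rfl, rfl⟩
  · obtain ⟨rfl, rfl⟩ := cons_eq_cons.mp hM
    exact Or.inr (Or.inr ⟨T, by simp, rfl⟩)

theorem flatten_eq_append_cons {a : α} {Γ Δ : List α} :
    ∀ {Ls : List (List α)}, Ls.flatten = Γ ++ a :: Δ →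
      ∃ Ls₁ L₁ L₂ Ls₂, Ls = Ls₁ ++ (L₁ ++ a :: L₂) :: Ls₂ ∧
        Γ = Ls₁.flatten ++ L₁ ∧ Δ = L₂ ++ Ls₂.flatten
  | [], h => by simp at h
  | L :: Ls, h => by
    rw [flatten_cons] at h
    rcases append_cons_eq_append_cases h.symm with ⟨T, rfl, rfl⟩ | ⟨T, rfl, hLs⟩
    · exact ⟨[], Γ, T, Ls, by simp, by simp, rfl⟩
    · obtain ⟨Ls₁, L₁, L₂, Ls₂, rfl, rfl, rfl⟩ := flatten_eq_append_cons hLs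
      exact ⟨L :: Ls₁, L₁, L₂, Ls₂, by simp, by simp, rfl⟩

end List

namespace DerLw

theorem ne_nil {P : List Fm} {A : Fm} (h : DerLw P A) : P ≠ [] := by
  induction h with
  | ax | ldiv_l | rdiv_l | mul_l | plus_l => simp
  | ldiv_r hne | rdiv_r hne => exact hne
  | mul_r _ _ ih => simp [ih]
  | plus_r Ps hne _ ih =>
    obtain ⟨Q, hQ⟩ := List.exists_mem_of_ne_nil Ps hne
    exact fun h => ih Q hQ (List.flatten_eq_nil_iff.mp h Q hQ)

def Cut (A : Fm) : Prop :=
  ∀ {P Γ Δ : List Fm} {C : Fm}, DerLw P A → DerLw (Γ ++ A :: Δ) C → DerLw (Γ ++ P ++ Δ) C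

def CutInto (P : List Fm) (A : Fm) (E : List Fm) (C : Fm) : Prop :=
  ∀ Γ Δ, E = Γ ++ A :: Δ → DerLw (Γ ++ P ++ Δ) C

inductive RightRuleDer : List Fm → Fm → Prop
  | ax (A : Fm) : RightRuleDer [A] A
  | ldiv_r {P : List Fm} {A B : Fm} : DerLw (A :: P) B → RightRuleDer P (Fm.ldiv A B)
  | rdiv_r {P : List Fm} {A B : Fm} : DerLw (P ++ [A]) B → RightRuleDer P (Fm.rdiv B A)
  | mul_r {Γ Δ : List Fm} {A B : Fm} : DerLw Γ A → DerLw Δ B → RightRuleDer (Γ ++ Δ) (Fm.mul A B)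
  | plus_r {A : Fm} (Ps : List (List Fm)) (hne : Ps ≠ []) :
      (∀ P ∈ Ps, DerLw P A) → RightRuleDer Ps.flatten (Fm.plus A)

/-- `LeftRuleDer Γ A Δ C`: the sequent `Γ, A, Δ → C` follows by a left rule whose principal
formula is the displayed occurrence of `A`. -/
inductive LeftRuleDer : List Fm → Fm → List Fm → Fm → Prop
  | ldiv_l {P Γ Δ : List Fm} {A B C : Fm} :
      DerLw P A → DerLw (Γ ++ B :: Δ) C → LeftRuleDer (Γ ++ P) (Fm.ldiv A B) Δ C
  | rdiv_l {P Γ Δ : List Fm} {A B C : Fm} :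
      DerLw P A → DerLw (Γ ++ B :: Δ) C → LeftRuleDer Γ (Fm.rdiv B A) (P ++ Δ) C
  | mul_l {Γ Δ : List Fm} {A B C : Fm} :
      DerLw (Γ ++ A :: B :: Δ) C → LeftRuleDer Γ (Fm.mul A B) Δ C
  | plus_l {Γ Δ : List Fm} {A C : Fm} :
      (∀ n : ℕ, 1 ≤ n → DerLw (Γ ++ List.replicate n A ++ Δ) C) → LeftRuleDer Γ (Fm.plus A) Δ C

theorem plug_of_rightRuleDer {Γ Δ : List Fm} {A C : Fm}
    (h : ∀ {P}, RightRuleDer P A → DerLw (Γ ++ P ++ Δ) C) {P : List Fm} (h₁ : DerLw P A) :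
    DerLw (Γ ++ P ++ Δ) C := by
  induction h₁ with
  | ax B => exact h (.ax B)
  | ldiv_r _ d => exact h (.ldiv_r d)
  | rdiv_r _ d => exact h (.rdiv_r d)
  | mul_r d₁ d₂ => exact h (.mul_r d₁ d₂)
  | plus_r Ps hne hall => exact h (.plus_r Ps hne hall)
  | ldiv_l d₁ _ _ ih => simpa using ldiv_l (Γ := Γ ++ _) (Δ := _ ++ Δ) d₁ (by simpa using ih h)
  | rdiv_l d₁ _ _ ih => simpa using rdiv_l (Γ := Γ ++ _) (Δ := _ ++ Δ) d₁ (by simpa using ih h)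
  | mul_l _ ih => simpa using mul_l (Γ := Γ ++ _) (Δ := _ ++ Δ) (by simpa using ih h)
  | plus_l _ ih =>
    simpa using plus_l (Γ := Γ ++ _) (Δ := _ ++ Δ) fun n hn => by simpa using ih n hn h

namespace CutInto

variable {P : List Fm} {A : Fm}

theorem ax (h₁ : DerLw P A) (B : Fm) : CutInto P A [B] B := by
  intro Γ Δ hE
  obtain ⟨rfl, rfl, rfl⟩ : Γ = [] ∧ B = A ∧ Δ = [] := by
    rcases Γ with _ | ⟨x, Γ⟩ <;> simp_all [eq_comm]
  simpa using h₁

theorem ldiv_r {E : List Fm} {X Y : Fm} (hP : P ≠ []) (ih : CutInto P A (X :: E) Y) :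
    CutInto P A E (.ldiv X Y) := fun Γ Δ hE =>
  DerLw.ldiv_r (by simp [hP]) (by simpa using ih (X :: Γ) Δ (by simp [hE]))

theorem rdiv_r {E : List Fm} {X Y : Fm} (hP : P ≠ []) (ih : CutInto P A (E ++ [X]) Y) :
    CutInto P A E (.rdiv Y X) := fun Γ Δ hE =>
  DerLw.rdiv_r (by simp [hP]) (by simpa using ih Γ (Δ ++ [X]) (by simp [hE]))

theorem mul_r {G D : List Fm} {X Y : Fm} (d₁ : DerLw G X) (d₂ : DerLw D Y)
    (ih₁ : CutInto P A G X) (ih₂ : CutInto P A D Y) : CutInto P A (G ++ D) (.mul X Y) := by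
  intro Γ Δ hE
  rcases List.append_cons_eq_append_cases hE.symm with ⟨T, rfl, rfl⟩ | ⟨T, rfl, rfl⟩
  · simpa using DerLw.mul_r (ih₁ Γ T rfl) d₂
  · simpa using DerLw.mul_r d₁ (ih₂ T Δ rfl)

theorem plus_r {Ps : List (List Fm)} {X : Fm} (hall : ∀ Q ∈ Ps, DerLw Q X)
    (ih : ∀ Q ∈ Ps, CutInto P A Q X) : CutInto P A Ps.flatten (.plus X) := by
  intro Γ Δ hE
  obtain ⟨Ps₁, Q₁, Q₂, Ps₂, rfl, rfl, rfl⟩ := List.flatten_eq_append_cons hE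
  have hall' : ∀ R ∈ Ps₁ ++ (Q₁ ++ P ++ Q₂) :: Ps₂, DerLw R X := by
    simp only [List.mem_append, List.mem_cons]
    rintro R (hR | rfl | hR)
    · exact hall R (by simp [hR])
    · exact ih _ (by simp) Q₁ Q₂ rfl
    · exact hall R (by simp [hR])
  simpa using DerLw.plus_r _ (by simp) hall'

theorem ldiv_l {Q G D : List Fm} {X Y C : Fm}
    (hcut : ∀ {Γ Δ C}, LeftRuleDer Γ A Δ C → DerLw (Γ ++ P ++ Δ) C)
    (d₁ : DerLw Q X) (d₂ : DerLw (G ++ Y :: D) C)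
    (ih₁ : CutInto P A Q X) (ih₂ : CutInto P A (G ++ Y :: D) C) :
    CutInto P A (G ++ Q ++ Fm.ldiv X Y :: D) C := by
  intro Γ Δ hE
  rcases List.append_cons_eq_append_cons_cases hE.symm with
    ⟨rfl, rfl, rfl⟩ | ⟨T, hGQ, rfl⟩ | ⟨T, rfl, rfl⟩
  · exact hcut (.ldiv_l d₁ d₂)
  · rcases List.append_cons_eq_append_cases hGQ.symm with ⟨T₁, rfl, rfl⟩ | ⟨T₁, rfl, rfl⟩
    · simpa using DerLw.ldiv_l (Γ := Γ ++ P ++ T₁) d₁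
        (by simpa using ih₂ Γ (T₁ ++ Y :: D) (by simp))
    · simpa using DerLw.ldiv_l (P := T₁ ++ P ++ T) (ih₁ T₁ T rfl) d₂
  · simpa using DerLw.ldiv_l (Δ := T ++ P ++ Δ) d₁
      (by simpa using ih₂ (G ++ Y :: T) Δ (by simp))

theorem rdiv_l {Q G D : List Fm} {X Y C : Fm}
    (hcut : ∀ {Γ Δ C}, LeftRuleDer Γ A Δ C → DerLw (Γ ++ P ++ Δ) C)
    (d₁ : DerLw Q X) (d₂ : DerLw (G ++ Y :: D) C)
    (ih₁ : CutInto P A Q X) (ih₂ : CutInto P A (G ++ Y :: D) C) :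
    CutInto P A (G ++ Fm.rdiv Y X :: (Q ++ D)) C := by
  intro Γ Δ hE
  rcases List.append_cons_eq_append_cons_cases hE.symm with
    ⟨rfl, rfl, rfl⟩ | ⟨T, rfl, rfl⟩ | ⟨T, rfl, hQD⟩
  · exact hcut (.rdiv_l d₁ d₂)
  · simpa using DerLw.rdiv_l (Γ := Γ ++ P ++ T) d₁
      (by simpa using ih₂ Γ (T ++ Y :: D) (by simp))
  · rcases List.append_cons_eq_append_cases hQD.symm with ⟨T₁, rfl, rfl⟩ | ⟨T₁, rfl, rfl⟩
    · simpa using DerLw.rdiv_l (P := T ++ P ++ T₁) (ih₁ T T₁ rfl) d₂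
    · simpa using DerLw.rdiv_l (Δ := T₁ ++ P ++ Δ) d₁
        (by simpa using ih₂ (G ++ Y :: T₁) Δ (by simp))

theorem mul_l {G D : List Fm} {X Y C : Fm}
    (hcut : ∀ {Γ Δ C}, LeftRuleDer Γ A Δ C → DerLw (Γ ++ P ++ Δ) C)
    (d : DerLw (G ++ X :: Y :: D) C) (ih : CutInto P A (G ++ X :: Y :: D) C) :
    CutInto P A (G ++ Fm.mul X Y :: D) C := by
  intro Γ Δ hE
  rcases List.append_cons_eq_append_cons_cases hE.symm with
    ⟨rfl, rfl, rfl⟩ | ⟨T, rfl, rfl⟩ | ⟨T, rfl, rfl⟩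
  · exact hcut (.mul_l d)
  · simpa using DerLw.mul_l (Γ := Γ ++ P ++ T) (Δ := D)
      (by simpa using ih Γ (T ++ X :: Y :: D) (by simp))
  · simpa using DerLw.mul_l (Δ := T ++ P ++ Δ)
      (by simpa using ih (G ++ X :: Y :: T) Δ (by simp))

theorem plus_l {G D : List Fm} {X C : Fm}
    (hcut : ∀ {Γ Δ C}, LeftRuleDer Γ A Δ C → DerLw (Γ ++ P ++ Δ) C)
    (prem : ∀ n, 1 ≤ n → DerLw (G ++ List.replicate n X ++ D) C)
    (ih : ∀ n, 1 ≤ n → CutInto P A (G ++ List.replicate n X ++ D) C) :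
    CutInto P A (G ++ Fm.plus X :: D) C := by
  intro Γ Δ hE
  rcases List.append_cons_eq_append_cons_cases hE.symm with
    ⟨rfl, rfl, rfl⟩ | ⟨T, rfl, rfl⟩ | ⟨T, rfl, rfl⟩
  · exact hcut (.plus_l prem)
  · simpa using DerLw.plus_l (Γ := Γ ++ P ++ T) (Δ := D) fun n hn => by
      simpa using ih n hn Γ (T ++ List.replicate n X ++ D) (by simp)
  · simpa using DerLw.plus_l (Δ := T ++ P ++ Δ) fun n hn => by
      simpa using ih n hn (G ++ List.replicate n X ++ T) Δ (by simp)

end CutInto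

namespace Cut

theorem of_leftRuleDer {A : Fm}
    (h : ∀ {P Γ Δ C}, DerLw P A → LeftRuleDer Γ A Δ C → DerLw (Γ ++ P ++ Δ) C) : Cut A := by
  intro P Γ Δ C h₁ h₂
  suffices ∀ {E C}, DerLw E C → CutInto P A E C from this h₂ Γ Δ rfl
  intro E C h₂
  induction h₂ with
  | ax B => exact .ax h₁ B
  | ldiv_r _ _ ih => exact ih.ldiv_r h₁.ne_nil
  | rdiv_r _ _ ih => exact ih.rdiv_r h₁.ne_nil
  | mul_r d₁ d₂ ih₁ ih₂ => exact .mul_r d₁ d₂ ih₁ ih₂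
  | plus_r _ _ hall ih => exact .plus_r hall ih
  | ldiv_l d₁ d₂ ih₁ ih₂ => exact .ldiv_l (h h₁) d₁ d₂ ih₁ ih₂
  | rdiv_l d₁ d₂ ih₁ ih₂ => exact .rdiv_l (h h₁) d₁ d₂ ih₁ ih₂
  | mul_l d ih => exact .mul_l (h h₁) d ih
  | plus_l prem ih => exact .plus_l (h h₁) prem ih

theorem flatten {A C : Fm} {Δ : List Fm} (hA : Cut A) :
    ∀ {Ps : List (List Fm)} {Γ : List Fm}, (∀ Q ∈ Ps, DerLw Q A) →
      DerLw (Γ ++ List.replicate Ps.length A ++ Δ) C → DerLw (Γ ++ Ps.flatten ++ Δ) C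
  | [], _, _, h => by simpa using h
  | Q :: Ps, Γ, hall, h => by
    have hQ := hA (Γ := Γ) (Δ := List.replicate Ps.length A ++ Δ) (hall Q (by simp))
      (by simpa [List.replicate_succ] using h)
    simpa using flatten hA (Γ := Γ ++ Q) (fun R hR => hall R (by simp [hR])) (by simpa using hQ)

theorem pr (n : ℕ) : Cut (.pr n) :=
  of_leftRuleDer fun _ h₂ => by cases h₂

theorem ldiv {X Y : Fm} (hX : Cut X) (hY : Cut Y) : Cut (.ldiv X Y) :=
  of_leftRuleDer fun h₁ h₂ => by
    rcases h₂ with ⟨d₁, d₂⟩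
    refine plug_of_rightRuleDer (fun hP => ?_) h₁
    rcases hP with _ | ⟨prem⟩
    · simpa using DerLw.ldiv_l d₁ d₂
    · simpa using hY (hX (Γ := []) d₁ prem) d₂

theorem rdiv {X Y : Fm} (hY : Cut Y) (hX : Cut X) : Cut (.rdiv Y X) :=
  of_leftRuleDer fun h₁ h₂ => by
    rcases h₂ with _ | ⟨d₁, d₂⟩
    refine plug_of_rightRuleDer (fun hP => ?_) h₁
    rcases hP with _ | _ | ⟨prem⟩
    · simpa using DerLw.rdiv_l d₁ d₂
    · simpa using hY (hX (Δ := []) d₁ prem) d₂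

theorem mul {X Y : Fm} (hX : Cut X) (hY : Cut Y) : Cut (.mul X Y) :=
  of_leftRuleDer fun h₁ h₂ => by
    rcases h₂ with _ | _ | ⟨d⟩
    refine plug_of_rightRuleDer (fun hP => ?_) h₁
    rcases hP with _ | _ | _ | ⟨e₁, e₂⟩
    · simpa using DerLw.mul_l d
    · simpa using hX e₁ (by simpa using hY (Γ := _ ++ [X]) e₂ (by simpa using d))

theorem plus {X : Fm} (hX : Cut X) : Cut (.plus X) :=
  of_leftRuleDer fun h₁ h₂ => by
    rcases h₂ with _ | _ | _ | ⟨prem⟩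
    refine plug_of_rightRuleDer (fun hP => ?_) h₁
    rcases hP with _ | _ | _ | _ | ⟨Ps, hne, hall⟩
    · simpa using DerLw.plus_l prem
    · exact hX.flatten hall (prem _ (List.length_pos_iff.mpr hne))

end Cut

theorem cut : ∀ A : Fm, Cut A
  | .pr n => Cut.pr n
  | .mul X Y => Cut.mul (cut X) (cut Y)
  | .ldiv X Y => Cut.ldiv (cut X) (cut Y)
  | .rdiv Y X => Cut.rdiv (cut Y) (cut X)
  | .plus X => Cut.plus (cut X)

end DerLw

/-- The cut rule is admissible in L⁺_ω. -/
theorem cut_admissible {P Γ Δ : List Fm} {A C : Fm}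
    (h₁ : DerLw P A) (h₂ : DerLw (Γ ++ A :: Δ) C) :
    DerLw (Γ ++ P ++ Δ) C :=
  DerLw.cut A h₁ h₂
end

section
/- The ω-rule for positive iteration is invertible in L⁺_ω: a sequent Γ, A⁺, Δ → C is derivable in L⁺_ω if and only if for every n ≥ 1 the sequent Γ, Aⁿ, Δ → C (with n copies of A in place of A⁺) is derivable in L⁺_ω. -/
/-!
The direction from right to left is the ω-rule itself. For the converse we prove, by induction
on derivations, that a derivable sequent stays derivable when any of its antecedent occurrences
of `A⁺` are replaced by powers `Aᵐ` (`m ≥ 1`, chosen per occurrence); this is the relation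
`UnfoldPlus`. Replacing arbitrarily many occurrences at once makes the induction hypothesis
stable under all rules, which split, regroup and extend antecedents. The axiom `A⁺ → A⁺`
becomes `Aᵐ → A⁺`, an instance of `(→⁺)ₘ`; at an `(⁺→)_ω` step whose principal `A⁺` is
replaced by `Aᵐ`, the `m`-th premise already is the required sequent; every other case
re-applies the same rule.
-/

inductive UnfoldPlus (A : Fm) : List Fm → List Fm → Prop where
  | nil : UnfoldPlus A [] []
  | cons (X : Fm) {S T : List Fm} : UnfoldPlus A S T → UnfoldPlus A (X :: S) (X :: T)
  | plus {m : ℕ} (hm : 1 ≤ m) {S T : List Fm} :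
      UnfoldPlus A S T → UnfoldPlus A (Fm.plus A :: S) (List.replicate m A ++ T)

namespace UnfoldPlus

variable {A : Fm}

theorem refl : ∀ S : List Fm, UnfoldPlus A S S
  | [] => nil
  | X :: S => cons X (refl S)

theorem append {S₁ T₁ S₂ T₂ : List Fm} (h₁ : UnfoldPlus A S₁ T₁) (h₂ : UnfoldPlus A S₂ T₂) :
    UnfoldPlus A (S₁ ++ S₂) (T₁ ++ T₂) := by
  induction h₁ with
  | nil => exact h₂
  | cons X _ ih => exact cons X ih
  | plus hm _ ih => simpa using plus hm ih

theorem eq_nil_of_nil {T : List Fm} (h : UnfoldPlus A [] T) : T = [] := by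
  cases h; rfl

theorem ne_nil {S T : List Fm} (h : UnfoldPlus A S T) (hS : S ≠ []) : T ≠ [] := by
  cases h with
  | nil => exact hS
  | cons X _ => simp
  | plus hm _ => simp [Nat.one_le_iff_ne_zero.mp hm]

theorem cons_inv {X : Fm} {S T : List Fm} (h : UnfoldPlus A (X :: S) T) :
    (∃ T', T = X :: T' ∧ UnfoldPlus A S T') ∨
      X = Fm.plus A ∧ ∃ m T', 1 ≤ m ∧ T = List.replicate m A ++ T' ∧ UnfoldPlus A S T' := by
  cases h with
  | cons _ h => exact .inl ⟨_, rfl, h⟩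
  | plus hm h => exact .inr ⟨rfl, _, _, hm, rfl, h⟩

theorem append_inv : ∀ {S₁ S₂ T : List Fm}, UnfoldPlus A (S₁ ++ S₂) T →
    ∃ T₁ T₂, T = T₁ ++ T₂ ∧ UnfoldPlus A S₁ T₁ ∧ UnfoldPlus A S₂ T₂
  | [], _, T, h => ⟨[], T, rfl, nil, h⟩
  | X :: S₁, S₂, T, h => by
    rcases cons_inv h with ⟨T', rfl, h'⟩ | ⟨rfl, m, T', hm, rfl, h'⟩
    · obtain ⟨T₁, T₂, rfl, h₁, h₂⟩ := append_inv h'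
      exact ⟨X :: T₁, T₂, rfl, cons X h₁, h₂⟩
    · obtain ⟨T₁, T₂, rfl, h₁, h₂⟩ := append_inv h'
      exact ⟨List.replicate m A ++ T₁, T₂, by simp, plus hm h₁, h₂⟩

theorem append_cons_inv {Γ Δ T : List Fm} {X : Fm} (h : UnfoldPlus A (Γ ++ X :: Δ) T) :
    ∃ TΓ TΔ, UnfoldPlus A Γ TΓ ∧ UnfoldPlus A Δ TΔ ∧
      (T = TΓ ++ X :: TΔ ∨
        X = Fm.plus A ∧ ∃ m, 1 ≤ m ∧ T = TΓ ++ List.replicate m A ++ TΔ) := by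
  obtain ⟨TΓ, T', rfl, hΓ, h'⟩ := append_inv h
  rcases cons_inv h' with ⟨TΔ, rfl, hΔ⟩ | ⟨rfl, m, TΔ, hm, rfl, hΔ⟩
  · exact ⟨TΓ, TΔ, hΓ, hΔ, .inl rfl⟩
  · exact ⟨TΓ, TΔ, hΓ, hΔ, .inr ⟨rfl, m, hm, by simp⟩⟩

theorem append_cons_inv_of_ne {Γ Δ T : List Fm} {X : Fm} (h : UnfoldPlus A (Γ ++ X :: Δ) T)
    (hX : X ≠ Fm.plus A) :
    ∃ TΓ TΔ, T = TΓ ++ X :: TΔ ∧ UnfoldPlus A Γ TΓ ∧ UnfoldPlus A Δ TΔ := by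
  obtain ⟨TΓ, TΔ, hΓ, hΔ, rfl | ⟨rfl, -⟩⟩ := append_cons_inv h
  · exact ⟨TΓ, TΔ, rfl, hΓ, hΔ⟩
  · exact absurd rfl hX

theorem flatten_inv : ∀ {Ps : List (List Fm)} {T : List Fm}, UnfoldPlus A Ps.flatten T →
    ∃ Ts : List (List Fm), T = Ts.flatten ∧ Ts.length = Ps.length ∧
      ∀ T' ∈ Ts, ∃ P ∈ Ps, UnfoldPlus A P T'
  | [], T, h => ⟨[], by simpa using eq_nil_of_nil h, rfl, by simp⟩
  | P :: Ps, T, h => by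
    obtain ⟨T₁, T₂, rfl, h₁, h₂⟩ := append_inv h
    obtain ⟨Ts, rfl, hlen, hTs⟩ := flatten_inv h₂
    refine ⟨T₁ :: Ts, rfl, by simp [hlen], ?_⟩
    rintro T' (_ | ⟨_, hT'⟩)
    · exact ⟨P, List.mem_cons_self, h₁⟩
    · obtain ⟨Q, hQ, hQT'⟩ := hTs T' hT'
      exact ⟨Q, List.mem_cons_of_mem P hQ, hQT'⟩

end UnfoldPlus

theorem DerLw.replicate_plus {A : Fm} {m : ℕ} (hm : 1 ≤ m) :
    DerLw (List.replicate m A) (Fm.plus A) := by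
  rw [← List.flatten_replicate_singleton]
  refine DerLw.plus_r _ (by simpa using Nat.one_le_iff_ne_zero.mp hm) fun P hP => ?_
  rw [List.eq_of_mem_replicate hP]
  exact DerLw.ax A

theorem DerLw.of_unfoldPlus {A : Fm} {S T : List Fm} {C : Fm} (h : DerLw S C)
    (hST : UnfoldPlus A S T) : DerLw T C := by
  induction h generalizing T with
  | ax B =>
    rcases hST.cons_inv with ⟨T', rfl, h'⟩ | ⟨rfl, m, T', hm, rfl, h'⟩
    · rw [h'.eq_nil_of_nil]; exact DerLw.ax B
    · rw [h'.eq_nil_of_nil, List.append_nil]; exact DerLw.replicate_plus hm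
  | ldiv_r hne _ ih => exact DerLw.ldiv_r (hST.ne_nil hne) (ih (.cons _ hST))
  | rdiv_r hne _ ih => exact DerLw.rdiv_r (hST.ne_nil hne) (ih (hST.append (.refl _)))
  | ldiv_l _ _ ih₁ ih₂ =>
    obtain ⟨TΓP, TΔ, rfl, hΓP, hΔ⟩ := hST.append_cons_inv_of_ne Fm.noConfusion
    obtain ⟨TΓ, TP, rfl, hΓ, hP⟩ := hΓP.append_inv
    exact DerLw.ldiv_l (ih₁ hP) (ih₂ (hΓ.append (.cons _ hΔ)))
  | rdiv_l _ _ ih₁ ih₂ =>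
    obtain ⟨TΓ, TPΔ, rfl, hΓ, hPΔ⟩ := hST.append_cons_inv_of_ne Fm.noConfusion
    obtain ⟨TP, TΔ, rfl, hP, hΔ⟩ := hPΔ.append_inv
    exact DerLw.rdiv_l (ih₁ hP) (ih₂ (hΓ.append (.cons _ hΔ)))
  | mul_r _ _ ih₁ ih₂ =>
    obtain ⟨T₁, T₂, rfl, h₁, h₂⟩ := hST.append_inv
    exact DerLw.mul_r (ih₁ h₁) (ih₂ h₂)
  | mul_l _ ih =>
    obtain ⟨TΓ, TΔ, rfl, hΓ, hΔ⟩ := hST.append_cons_inv_of_ne Fm.noConfusion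
    exact DerLw.mul_l (ih (hΓ.append (.cons _ (.cons _ hΔ))))
  | plus_r Ps hne _ ih =>
    obtain ⟨Ts, rfl, hlen, hTs⟩ := UnfoldPlus.flatten_inv hST
    have hTs_ne : Ts ≠ [] := by
      rintro rfl
      exact hne (List.length_eq_zero_iff.mp hlen.symm)
    refine DerLw.plus_r Ts hTs_ne fun T' hT' => ?_
    obtain ⟨P, hP, hPT'⟩ := hTs T' hT'
    exact ih P hP hPT'
  | plus_l _ ih =>
    obtain ⟨TΓ, TΔ, hΓ, hΔ, rfl | ⟨⟨⟩, m, hm, rfl⟩⟩ := hST.append_cons_inv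
    · exact DerLw.plus_l fun n hn => ih n hn ((hΓ.append (.refl _)).append hΔ)
    · exact ih m hm ((hΓ.append (.refl _)).append hΔ)

/-- The ω-rule `(⁺→)_ω` is invertible in L⁺_ω: `Γ, A⁺, Δ → C` is derivable
iff for every `n ≥ 1` the sequent `Γ, Aⁿ, Δ → C` is derivable. -/
theorem omega_rule_invertible {Γ Δ : List Fm} {A C : Fm} :
    DerLw (Γ ++ Fm.plus A :: Δ) C ↔
      ∀ n : ℕ, 1 ≤ n → DerLw (Γ ++ List.replicate n A ++ Δ) C := by
  refine ⟨fun h n hn => h.of_unfoldPlus (A := A) ?_, DerLw.plus_l⟩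
  simpa using (UnfoldPlus.refl Γ).append (.plus hn (.refl Δ))
end

section
/- The Lambek calculus L is a conservative fragment of L⁺_ω: a sequent in which the connective ⁺ does not occur is derivable in L⁺_ω if and only if it is derivable in L. -/
/-- Derivability in the Lambek calculus L (no rules for `⁺`). -/
inductive DerL : List Fm → Fm → Prop where
  | ax (A : Fm) : DerL [A] A
  | ldiv_r {P : List Fm} {A B : Fm} (hne : P ≠ []) :
      DerL (A :: P) B → DerL P (Fm.ldiv A B)
  | ldiv_l {P Γ Δ : List Fm} {A B C : Fm} :
      DerL P A → DerL (Γ ++ B :: Δ) C →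
      DerL (Γ ++ P ++ Fm.ldiv A B :: Δ) C
  | rdiv_r {P : List Fm} {A B : Fm} (hne : P ≠ []) :
      DerL (P ++ [A]) B → DerL P (Fm.rdiv B A)
  | rdiv_l {P Γ Δ : List Fm} {A B C : Fm} :
      DerL P A → DerL (Γ ++ B :: Δ) C →
      DerL (Γ ++ Fm.rdiv B A :: (P ++ Δ)) C
  | mul_r {Γ Δ : List Fm} {A B : Fm} :
      DerL Γ A → DerL Δ B → DerL (Γ ++ Δ) (Fm.mul A B)
  | mul_l {Γ Δ : List Fm} {A B C : Fm} :
      DerL (Γ ++ A :: B :: Δ) C → DerL (Γ ++ Fm.mul A B :: Δ) C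

/-- A type in which the connective `⁺` does not occur. -/
def PlusFree : Fm → Prop
  | Fm.pr _ => True
  | Fm.mul A B => PlusFree A ∧ PlusFree B
  | Fm.ldiv A B => PlusFree A ∧ PlusFree B
  | Fm.rdiv A B => PlusFree A ∧ PlusFree B
  | Fm.plus _ => False

theorem DerL.toDerLw {P : List Fm} {B : Fm} (h : DerL P B) : DerLw P B := by
  induction h with
  | ax A => exact .ax A
  | ldiv_r hne _ ih => exact .ldiv_r hne ih
  | ldiv_l _ _ ih₁ ih₂ => exact .ldiv_l ih₁ ih₂
  | rdiv_r hne _ ih => exact .rdiv_r hne ih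
  | rdiv_l _ _ ih₁ ih₂ => exact .rdiv_l ih₁ ih₂
  | mul_r _ _ ih₁ ih₂ => exact .mul_r ih₁ ih₂
  | mul_l _ ih => exact .mul_l ih

/-- Every rule other than those for `⁺` has the subformula property, so a `⁺`-free
conclusion has `⁺`-free premises and the derivation never leaves L. -/
theorem DerLw.toDerL {P : List Fm} {B : Fm} (h : DerLw P B)
    (hP : ∀ A ∈ P, PlusFree A) (hB : PlusFree B) : DerL P B := by
  induction h with
  | ax A => exact .ax A
  | ldiv_r hne _ ih =>
    simp only [PlusFree, List.mem_cons, forall_eq_or_imp] at *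
    exact .ldiv_r hne (ih ⟨hB.1, hP⟩ hB.2)
  | ldiv_l _ _ ih₁ ih₂ =>
    simp only [PlusFree, List.mem_append, List.mem_cons, or_imp, forall_and, forall_eq] at *
    exact .ldiv_l (ih₁ hP.1.2 hP.2.1.1) (ih₂ ⟨hP.1.1, hP.2.1.2, hP.2.2⟩ hB)
  | rdiv_r hne _ ih =>
    simp only [PlusFree, List.mem_append, List.mem_singleton, or_imp, forall_and, forall_eq] at *
    exact .rdiv_r hne (ih ⟨hP, hB.2⟩ hB.1)
  | rdiv_l _ _ ih₁ ih₂ =>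
    simp only [PlusFree, List.mem_append, List.mem_cons, or_imp, forall_and, forall_eq] at *
    exact .rdiv_l (ih₁ hP.2.2.1 hP.2.1.2) (ih₂ ⟨hP.1, hP.2.1.1, hP.2.2.2⟩ hB)
  | mul_r _ _ ih₁ ih₂ =>
    simp only [PlusFree, List.mem_append, or_imp, forall_and] at *
    exact .mul_r (ih₁ hP.1 hB.1) (ih₂ hP.2 hB.2)
  | mul_l _ ih =>
    simp only [PlusFree, List.mem_append, List.mem_cons, or_imp, forall_and, forall_eq] at *
    exact .mul_l (ih ⟨hP.1, hP.2.1.1, hP.2.1.2, hP.2.2⟩ hB)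
  | plus_r => exact hB.elim
  | @plus_l _ _ A => exact (hP A.plus (by simp) : False).elim

/-- L is a conservative fragment of L⁺_ω: a sequent without `⁺`
is derivable in L⁺_ω iff it is derivable in L. -/
theorem conservative_fragment {P : List Fm} {B : Fm}
    (hP : ∀ A ∈ P, PlusFree A) (hB : PlusFree B) :
    DerLw P B ↔ DerL P B :=
  ⟨fun h => h.toDerL hP hB, DerL.toDerLw⟩
end

section
/- There is a computable function mapping each context-free grammar G over {b, c} without ε-rules to a context-free grammar G'' over {b, c} without ε-rules such that the language generated by G equals {b, c}⁺ if and only if the language generated by G'' includes (b⁺c⁺)⁺ = { b^{m₁} c^{k₁} … b^{mₙ} c^{kₙ} | n ≥ 1, all mᵢ, kⱼ ≥ 1 }. Hence the totality problem for ε-free context-free grammars over {b, c} many-one reduces to the alternation problem ALT₂. -/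
/-- Symbols of a context-free grammar over the two-letter alphabet `Bool`
(`false` plays the role of `b`, `true` of `c`): terminals are `Sum.inl`,
nonterminals (numbered by naturals) are `Sum.inr`. -/
abbrev GSym : Type := Bool ⊕ ℕ

/-- A context-free grammar over `{b, c}`: a start nonterminal together with a
finite list of rules, each rewriting a nonterminal to a string of symbols. -/
abbrev CFG : Type := ℕ × List (ℕ × List GSym)

/-- One rewriting step of the grammar `G`. -/
def CFGStep (G : CFG) (x y : List GSym) : Prop :=
  ∃ r ∈ G.2, ∃ p q : List GSym, x = p ++ Sum.inr r.1 :: q ∧ y = p ++ r.2 ++ q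

/-- The language generated by the grammar `G`. -/
def Lang (G : CFG) : Set (List Bool) :=
  { w | Relation.ReflTransGen (CFGStep G) [Sum.inr G.1] (w.map Sum.inl) }

/-- `G` has no ε-rules. -/
def EpsFree (G : CFG) : Prop := ∀ r ∈ G.2, r.2 ≠ []

/-- The language `(b⁺c⁺)⁺ = { b^{m₁} c^{k₁} … b^{mₙ} c^{kₙ} | n ≥ 1, mᵢ, kⱼ ≥ 1 }`
over `{b, c}` (with `b = false`, `c = true`). -/
def AltLang : Set (List Bool) :=
  { w | ∃ l : List (ℕ × ℕ), l ≠ [] ∧ (∀ p ∈ l, 1 ≤ p.1 ∧ 1 ≤ p.2) ∧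
      w = (l.map fun p => List.replicate p.1 false ++ List.replicate p.2 true).flatten }

/-!
Let `σ` be the substitution `b ↦ b c⁺`, `c ↦ b b⁺ c⁺`. Then `(b⁺c⁺)⁺ = σ({b, c}⁺)`, and `σ` is
uniquely decodable: a word of `(b⁺c⁺)⁺` splits uniquely into maximal blocks `bᵐ cᵏ`, and each
block determines its letter. Replacing every terminal of `G` by a fresh nonterminal generating
its `σ`-image gives an ε-free grammar `G''` with `L(G'') = σ(L(G))`. As `L(G) ⊆ {b, c}⁺`, unique
decoding makes `σ({b, c}⁺) ⊆ σ(L(G))` equivalent to `{b, c}⁺ ⊆ L(G)`.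
-/

namespace AltReduction

open List

abbrev Derives (G : CFG) : List GSym → List GSym → Prop := Relation.ReflTransGen (CFGStep G)

section Derivations

variable {G : CFG} {x x' y y' : List GSym}

theorem CFGStep.append_append (h : CFGStep G x y) (p q : List GSym) :
    CFGStep G (p ++ x ++ q) (p ++ y ++ q) := by
  obtain ⟨r, hr, p', q', rfl, rfl⟩ := h
  exact ⟨r, hr, p ++ p', q' ++ q, by simp, by simp⟩

theorem derives_append (hx : Derives G x x') (hy : Derives G y y') :
    Derives G (x ++ y) (x' ++ y') := by
  have h₁ : Derives G (x ++ y) (x' ++ y) :=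
    hx.lift (· ++ y) fun _ _ h => by simpa using CFGStep.append_append h [] y
  have h₂ : Derives G (x' ++ y) (x' ++ y') :=
    hy.lift (x' ++ ·) fun _ _ h => by simpa using CFGStep.append_append h x' []
  exact h₁.trans h₂

theorem ne_nil_of_derives (hG : EpsFree G) (h : Derives G x y) (hx : x ≠ []) : y ≠ [] := by
  induction h with
  | refl => exact hx
  | tail _ hstep _ =>
    obtain ⟨r, hr, p, q, _, rfl⟩ := hstep
    simpa using fun _ h => absurd h (hG r hr)

theorem lang_subset_ne_nil (hG : EpsFree G) : Lang G ⊆ {w | w ≠ []} := fun w hw => by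
  simpa using ne_nil_of_derives hG hw (by simp)

def derivedLang (G : CFG) (x : List GSym) : Language Bool := {w | Derives G x (w.map Sum.inl)}

theorem derivedLang_anti (h : Derives G x y) : derivedLang G y ≤ derivedLang G x :=
  fun _ hw => h.trans hw

theorem derivedLang_mul_le : derivedLang G x * derivedLang G y ≤ derivedLang G (x ++ y) := by
  rintro _ ⟨u, hu, v, hv, rfl⟩
  simpa [derivedLang] using derives_append hu hv

theorem prod_map_derivedLang_le : ∀ x : List GSym,
    (x.map fun s => derivedLang G [s]).prod ≤ derivedLang G x
  | [] => by
    rintro _ rfl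
    exact Relation.ReflTransGen.refl
  | s :: x => by
    rw [map_cons, prod_cons]
    exact (mul_le_mul_right (prod_map_derivedLang_le x) _).trans derivedLang_mul_le

section Soundness

variable {S : GSym → Language Bool} (hrules : ∀ r ∈ G.2, (r.2.map S).prod ≤ S (.inr r.1))
include hrules

theorem prod_map_le_of_step (h : CFGStep G x y) : (y.map S).prod ≤ (x.map S).prod := by
  obtain ⟨r, hr, p, q, rfl, rfl⟩ := h
  simp only [map_append, map_cons, prod_append, prod_cons, mul_assoc]
  gcongr
  exact hrules r hr

theorem prod_map_le_of_derives (h : Derives G x y) : (y.map S).prod ≤ (x.map S).prod := by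
  induction h with
  | refl => exact le_rfl
  | tail _ hstep ih => exact (prod_map_le_of_step hrules hstep).trans ih

theorem derivedLang_le_prod (hterm : ∀ t, [t] ∈ S (.inl t)) (x : List GSym) :
    derivedLang G x ≤ (x.map S).prod := by
  intro w hw
  refine prod_map_le_of_derives hrules hw ?_
  clear hw
  induction w with
  | nil => exact Language.nil_mem_one
  | cons t w ih => exact Language.append_mem_mul (hterm t) ih

end Soundness

end Derivations

section Substitution

variable {α β : Type*}

def subst (σ : α → Language β) (L : Language α) : Language β :=
  {u | ∃ v ∈ L, u ∈ (v.map σ).prod}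

variable {σ : α → Language β}

theorem subst_mono {L M : Language α} (h : L ≤ M) : subst σ L ≤ subst σ M :=
  fun _ ⟨v, hv, hu⟩ => ⟨v, h hv, hu⟩

theorem subst_mul_le (L M : Language α) : subst σ L * subst σ M ≤ subst σ (L * M) := by
  rintro _ ⟨u, ⟨v, hv, hu⟩, u', ⟨v', hv', hu'⟩, rfl⟩
  exact ⟨v ++ v', ⟨v, hv, v', hv', rfl⟩, by simpa using Language.append_mem_mul hu hu'⟩

theorem prod_map_subst_le : ∀ Ls : List (Language α), (Ls.map (subst σ)).prod ≤ subst σ Ls.prod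
  | [] => by
    rintro _ rfl
    exact ⟨[], rfl, rfl⟩
  | L :: Ls => by
    rw [map_cons, prod_cons, prod_cons]
    exact (mul_le_mul_right (prod_map_subst_le Ls) _).trans (subst_mul_le _ _)

theorem le_subst_of_singleton_mem {L : Language α} {a : α} (h : [a] ∈ L) : σ a ≤ subst σ L :=
  fun u hu => ⟨[a], h, by rw [map_singleton, prod_singleton]; exact hu⟩

theorem exists_mem_prod_map (hσ : ∀ a, ∃ u, u ∈ σ a) (v : List α) : ∃ u, u ∈ (v.map σ).prod := by
  induction v with
  | nil => exact ⟨[], rfl⟩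
  | cons a v ih =>
    obtain ⟨u, hu⟩ := hσ a
    obtain ⟨u', hu'⟩ := ih
    exact ⟨u ++ u', Language.append_mem_mul hu hu'⟩

theorem subst_le_subst_iff (hσ : ∀ a, ∃ u, u ∈ σ a)
    (hdecode : ∀ (v v' : List α) u, u ∈ (v.map σ).prod → u ∈ (v'.map σ).prod → v = v')
    {L M : Language α} : subst σ L ≤ subst σ M ↔ L ≤ M := by
  refine ⟨fun h v hv => ?_, subst_mono⟩
  obtain ⟨u, hu⟩ := exists_mem_prod_map hσ v
  obtain ⟨v', hv', hu'⟩ := h ⟨v, hv, hu⟩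
  exact hdecode v v' u hu hu' ▸ hv'

end Substitution

section Blocks

def block (p : ℕ × ℕ) : List Bool := replicate p.1 false ++ replicate p.2 true

/-- `σ`: `b ↦ b c⁺`, `c ↦ b b⁺ c⁺`. -/
def letterLang (t : Bool) : Language Bool :=
  {u | ∃ p : ℕ × ℕ, (1 ≤ p.1 ∧ 1 ≤ p.2) ∧ decide (2 ≤ p.1) = t ∧ u = block p}

theorem block_succ_fst (m k : ℕ) : block (m + 1, k) = false :: block (m, k) := rfl

theorem letterLang_nonempty (t : Bool) : ∃ u, u ∈ letterLang t := by
  cases t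
  exacts [⟨_, (1, 1), by decide, by decide, rfl⟩, ⟨_, (2, 1), by decide, by decide, rfl⟩]

theorem mem_prod_map_letterLang {v : List Bool} {u : List Bool} :
    u ∈ (v.map letterLang).prod ↔ ∃ l : List (ℕ × ℕ), (∀ p ∈ l, 1 ≤ p.1 ∧ 1 ≤ p.2) ∧
      l.map (fun p => decide (2 ≤ p.1)) = v ∧ u = (l.map block).flatten := by
  induction v generalizing u with
  | nil =>
    rw [map_nil, prod_nil, Language.mem_one]
    constructor
    · rintro rfl
      exact ⟨[], by simp, rfl, rfl⟩
    · rintro ⟨l, -, hl, rfl⟩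
      simp_all
  | cons t v ih =>
    rw [map_cons, prod_cons, Language.mem_mul]
    constructor
    · rintro ⟨_, ⟨p, hp, rfl, rfl⟩, u', hu', rfl⟩
      obtain ⟨l, hl, rfl, rfl⟩ := ih.1 hu'
      exact ⟨p :: l, forall_mem_cons.2 ⟨hp, hl⟩, rfl, rfl⟩
    · rintro ⟨_ | ⟨p, l⟩, hl, hv, rfl⟩
      · simp at hv
      · simp only [map_cons, cons.injEq] at hv
        exact ⟨_, ⟨p, hl p (by simp), hv.1, rfl⟩, _,
          ih.2 ⟨l, fun q hq => hl q (by simp [hq]), hv.2, rfl⟩, rfl⟩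

theorem altLang_eq_subst : AltLang = subst letterLang {w | w ≠ []} := by
  ext u
  constructor
  · rintro ⟨l, hl, hval, rfl⟩
    exact ⟨_, fun h => hl (map_eq_nil_iff.1 h), mem_prod_map_letterLang.2 ⟨l, hval, rfl, rfl⟩⟩
  · rintro ⟨v, hv, hu⟩
    obtain ⟨l, hval, rfl, rfl⟩ := mem_prod_map_letterLang.1 hu
    exact ⟨l, fun h => hv (by rw [h]; rfl), hval, rfl⟩

theorem replicate_append_inj {α : Type*} {a : α} {m m' : ℕ} {X X' : List α}
    (hX : X.head? ≠ some a) (hX' : X'.head? ≠ some a)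
    (h : replicate m a ++ X = replicate m' a ++ X') : m = m' ∧ X = X' := by
  induction m generalizing m' with
  | zero =>
    cases m' with
    | zero => simpa using h
    | succ m' => simp [replicate_succ] at h; simp [h] at hX
  | succ m ih =>
    cases m' with
    | zero => simp [replicate_succ] at h; simp [← h] at hX'
    | succ m' =>
      simp only [replicate_succ, cons_append, cons.injEq, true_and] at h
      simpa using ih h

theorem head?_flatten_blocks_ne_true {l : List (ℕ × ℕ)} (hl : ∀ p ∈ l, 1 ≤ p.1 ∧ 1 ≤ p.2) :
    (l.map block).flatten.head? ≠ some true := by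
  rcases l with _ | ⟨⟨_ | m, k⟩, l⟩
  · simp
  · simp at hl
  · simp [block_succ_fst]

theorem block_append_inj {p p' : ℕ × ℕ} {X X' : List Bool} (hp : 1 ≤ p.2) (hp' : 1 ≤ p'.2)
    (hX : X.head? ≠ some true) (hX' : X'.head? ≠ some true)
    (h : block p ++ X = block p' ++ X') : p = p' ∧ X = X' := by
  have hc : ∀ {k : ℕ} {Y : List Bool}, 1 ≤ k → (replicate k true ++ Y).head? ≠ some false := by
    rintro (_ | k) Y hk <;> simp_all [replicate_succ]
  simp only [block, append_assoc] at h
  obtain ⟨h₁, h⟩ := replicate_append_inj (hc hp) (hc hp') h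
  obtain ⟨h₂, rfl⟩ := replicate_append_inj hX hX' h
  exact ⟨Prod.ext h₁ h₂, rfl⟩

theorem flatten_blocks_injective {l l' : List (ℕ × ℕ)} (hl : ∀ p ∈ l, 1 ≤ p.1 ∧ 1 ≤ p.2)
    (hl' : ∀ p ∈ l', 1 ≤ p.1 ∧ 1 ≤ p.2) (h : (l.map block).flatten = (l'.map block).flatten) :
    l = l' := by
  induction l generalizing l' with
  | nil =>
    rcases l' with _ | ⟨⟨_ | m, k⟩, l'⟩
    · rfl
    · simp at hl'
    · simp [block_succ_fst] at h
  | cons p l ih =>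
    rcases l' with _ | ⟨p', l'⟩
    · rcases p with ⟨_ | m, k⟩
      · simp at hl
      · simp [block_succ_fst] at h
    · simp only [forall_mem_cons] at hl hl'
      simp only [map_cons, flatten_cons] at h
      obtain ⟨rfl, hrest⟩ := block_append_inj hl.1.2 hl'.1.2 (head?_flatten_blocks_ne_true hl.2)
        (head?_flatten_blocks_ne_true hl'.2) h
      rw [ih hl.2 hl'.2 hrest]

theorem letterLang_decode (v v' u : List Bool) (hu : u ∈ (v.map letterLang).prod)
    (hu' : u ∈ (v'.map letterLang).prod) : v = v' := by
  obtain ⟨l, hl, rfl, rfl⟩ := mem_prod_map_letterLang.1 hu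
  obtain ⟨l', hl', rfl, h⟩ := mem_prod_map_letterLang.1 hu'
  rw [flatten_blocks_injective hl hl' h]

end Blocks

section Grammar

def liftSym : GSym → GSym
  | .inl t => .inr (cond t 1 0)
  | .inr n => .inr (n + 4)

def blockRules : List (ℕ × List GSym) :=
  [(0, [.inl false, .inr 2]), (1, [.inl false, .inr 3]),
   (2, [.inl true]), (2, [.inl true, .inr 2]),
   (3, [.inl false, .inr 2]), (3, [.inl false, .inr 3])]

/-- Nonterminals of `G` are shifted by `4` and each letter `t` becomes the nonterminal
`cond t 1 0`; the nonterminal `0` generates `b c⁺`, `1` generates `b b⁺ c⁺`, and `2`, `3`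
are the helpers generating `c⁺` and `b⁺ c⁺`. -/
def altGrammar (G : CFG) : CFG :=
  (G.1 + 4, (G.2.map fun r => (r.1 + 4, r.2.map liftSym)) ++ blockRules)

theorem primrec_liftSym : Primrec liftSym := by
  have hinl : Primrec₂ fun (_ : GSym) (t : Bool) => (Sum.inr (cond t 1 0) : GSym) :=
    (Primrec.sumInr.comp (Primrec.cond Primrec.snd (Primrec.const 1) (Primrec.const 0))).to₂
  have hinr : Primrec₂ fun (_ : GSym) (n : ℕ) => (Sum.inr (n + 4) : GSym) :=
    (Primrec.sumInr.comp (Primrec.nat_add.comp Primrec.snd (Primrec.const 4))).to₂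
  exact (Primrec.sumCasesOn Primrec.id hinl hinr).of_eq fun s => by cases s <;> rfl

theorem computable_altGrammar : Computable altGrammar := by
  have hrule : Primrec fun r : ℕ × List GSym => (r.1 + 4, r.2.map liftSym) :=
    (Primrec.nat_add.comp Primrec.fst (Primrec.const 4)).pair
      (Primrec.list_map Primrec.snd (primrec_liftSym.comp Primrec.snd).to₂)
  exact ((Primrec.nat_add.comp Primrec.fst (Primrec.const 4)).pair
    (Primrec.list_append.comp (Primrec.list_map Primrec.snd (hrule.comp Primrec.snd).to₂)
      (Primrec.const blockRules))).to_comp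

variable {G : CFG}

theorem epsFree_altGrammar (hG : EpsFree G) : EpsFree (altGrammar G) := by
  intro r hr
  rcases mem_append.1 hr with h | h
  · obtain ⟨r₀, hr₀, rfl⟩ := mem_map.1 h
    simpa using hG r₀ hr₀
  · simp only [blockRules, mem_cons, not_mem_nil, or_false] at h
    rcases h with rfl | rfl | rfl | rfl | rfl | rfl <;> simp

theorem derives_liftSym {x y : List GSym} (h : Derives G x y) :
    Derives (altGrammar G) (x.map liftSym) (y.map liftSym) := by
  refine h.lift (map liftSym) fun _ _ hstep => ?_
  obtain ⟨r, hr, p, q, rfl, rfl⟩ := hstep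
  exact ⟨(r.1 + 4, r.2.map liftSym), mem_append_left _ (mem_map_of_mem hr), p.map liftSym,
    q.map liftSym, by simp [liftSym], by simp⟩

def cPlus : Language Bool := {u | ∃ k, u = replicate (k + 1) true}

def blockLang : Language Bool := {u | ∃ m k, u = block (m + 1, k + 1)}

/-- The language each symbol of `altGrammar G` generates; checking it against every rule bounds
`Lang (altGrammar G)` from above. -/
def blockSem (G : CFG) : GSym → Language Bool
  | .inl t => {[t]}
  | .inr 0 => letterLang false
  | .inr 1 => letterLang true
  | .inr 2 => cPlus
  | .inr 3 => blockLang
  | .inr (n + 4) => subst letterLang (derivedLang G [.inr n])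

theorem blockRules_sound :
    ∀ r ∈ blockRules, (r.2.map (blockSem G)).prod ≤ blockSem G (.inr r.1) := by
  simp only [blockRules, mem_cons, not_mem_nil, or_false]
  rintro r (rfl | rfl | rfl | rfl | rfl | rfl) u hu <;>
    simp only [map_cons, map_nil, prod_cons, prod_nil, mul_one, blockSem] at hu ⊢
  · obtain ⟨_, rfl, _, ⟨k, rfl⟩, rfl⟩ := hu
    exact ⟨(1, k + 1), by simp, rfl, rfl⟩
  · obtain ⟨_, rfl, _, ⟨m, k, rfl⟩, rfl⟩ := hu
    exact ⟨(m + 2, k + 1), by simp, by simp, rfl⟩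
  · obtain rfl := hu
    exact ⟨0, rfl⟩
  · obtain ⟨_, rfl, _, ⟨k, rfl⟩, rfl⟩ := hu
    exact ⟨k + 1, rfl⟩
  · obtain ⟨_, rfl, _, ⟨k, rfl⟩, rfl⟩ := hu
    exact ⟨0, k, rfl⟩
  · obtain ⟨_, rfl, _, ⟨m, k, rfl⟩, rfl⟩ := hu
    exact ⟨m + 1, k, rfl⟩

theorem blockSem_liftSym_le (s : GSym) :
    blockSem G (liftSym s) ≤ subst letterLang (derivedLang G [s]) := by
  rcases s with t | n
  · cases t <;> exact le_subst_of_singleton_mem (σ := letterLang) .refl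
  · exact le_rfl

theorem liftedRule_sound {n : ℕ} {rhs : List GSym} (hr : (n, rhs) ∈ G.2) :
    ((rhs.map liftSym).map (blockSem G)).prod ≤
      subst letterLang (derivedLang G [.inr n]) :=
  calc ((rhs.map liftSym).map (blockSem G)).prod
      ≤ ((rhs.map fun s => derivedLang G [s]).map (subst letterLang)).prod := by
        rw [List.map_map, List.map_map]
        exact prod_le_prod' fun s _ => blockSem_liftSym_le s
    _ ≤ subst letterLang (derivedLang G rhs) :=
        (prod_map_subst_le _).trans (subst_mono (prod_map_derivedLang_le rhs))
    _ ≤ subst letterLang (derivedLang G [.inr n]) :=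
        subst_mono (derivedLang_anti (.single ⟨(n, rhs), hr, [], [], rfl, by simp⟩))

theorem altGrammar_rules_sound :
    ∀ r ∈ (altGrammar G).2, (r.2.map (blockSem G)).prod ≤ blockSem G (.inr r.1) := by
  intro r hr
  rcases mem_append.1 hr with h | h
  · obtain ⟨⟨n, rhs⟩, hrG, rfl⟩ := mem_map.1 h
    exact liftedRule_sound hrG
  · exact blockRules_sound r h

theorem lang_altGrammar_le :
    derivedLang (altGrammar G) [.inr (G.1 + 4)] ≤ subst letterLang (derivedLang G [.inr G.1]) := by
  simpa [blockSem] using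
    derivedLang_le_prod altGrammar_rules_sound (fun _ => rfl) [.inr (G.1 + 4)]

theorem cons_mem_derivedLang {H : CFG} {a a' : ℕ} {t : Bool} {w : List Bool}
    (hr : (a, [.inl t, .inr a']) ∈ H.2) (hw : w ∈ derivedLang H [.inr a']) :
    t :: w ∈ derivedLang H [.inr a] :=
  Relation.ReflTransGen.head ⟨_, hr, [], [], rfl, rfl⟩
    (derives_append (x := [.inl t]) (x' := [.inl t]) .refl hw)

theorem blockRule_mem {r : ℕ × List GSym} (h : r ∈ blockRules) : r ∈ (altGrammar G).2 :=
  mem_append_right _ h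

theorem cPlus_le : cPlus ≤ derivedLang (altGrammar G) [.inr 2] := by
  rintro _ ⟨k, rfl⟩
  induction k with
  | zero =>
    have hr : (2, [.inl true]) ∈ (altGrammar G).2 := blockRule_mem (by simp [blockRules])
    exact .single ⟨_, hr, [], [], rfl, rfl⟩
  | succ k ih => exact cons_mem_derivedLang (blockRule_mem (by simp [blockRules])) ih

theorem blockLang_le : blockLang ≤ derivedLang (altGrammar G) [.inr 3] := by
  rintro _ ⟨m, k, rfl⟩
  induction m with
  | zero => exact cons_mem_derivedLang (blockRule_mem (by simp [blockRules])) (cPlus_le ⟨k, rfl⟩)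
  | succ m ih => exact cons_mem_derivedLang (blockRule_mem (by simp [blockRules])) ih

theorem letterLang_le (t : Bool) :
    letterLang t ≤ derivedLang (altGrammar G) [liftSym (.inl t)] := by
  rintro _ ⟨⟨m, k⟩, ⟨hm, hk⟩, rfl, rfl⟩
  obtain ⟨k, rfl⟩ := Nat.exists_eq_add_of_le' hk
  rcases m with _ | _ | m
  · simp at hm
  · exact cons_mem_derivedLang (blockRule_mem (by simp [blockRules])) (cPlus_le ⟨k, rfl⟩)
  · exact cons_mem_derivedLang (blockRule_mem (by simp [blockRules])) (blockLang_le ⟨m, k, rfl⟩)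

theorem subst_lang_le_lang_altGrammar :
    subst letterLang (derivedLang G [.inr G.1]) ≤ derivedLang (altGrammar G) [.inr (G.1 + 4)] := by
  rintro u ⟨v, hv, hu⟩
  have hlift : Derives (altGrammar G) [.inr (G.1 + 4)] ((v.map Sum.inl).map liftSym) :=
    derives_liftSym hv
  refine derivedLang_anti hlift (prod_map_derivedLang_le _ ?_)
  rw [List.map_map, List.map_map]
  exact prod_le_prod' (fun t _ => letterLang_le t) hu

theorem lang_altGrammar : Lang (altGrammar G) = subst letterLang (Lang G) :=
  le_antisymm (α := Language Bool) lang_altGrammar_le subst_lang_le_lang_altGrammar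

theorem lang_eq_ne_nil_iff_altLang_subset (hG : EpsFree G) :
    Lang G = {w | w ≠ []} ↔ AltLang ⊆ Lang (altGrammar G) := by
  have hdecode := subst_le_subst_iff (L := {w | w ≠ []}) (M := Lang G) letterLang_nonempty
    letterLang_decode
  rw [lang_altGrammar, altLang_eq_subst]
  exact ⟨fun h => hdecode.2 h.ge, fun h => le_antisymm (lang_subset_ne_nil hG) (hdecode.1 h)⟩

end Grammar

end AltReduction

/-- The totality problem for ε-free context-free grammars over `{b, c}`
many-one reduces, via a computable function, to the alternation problem ALT₂:
`L(G) = {b,c}⁺` iff `L(G'') ⊇ (b⁺c⁺)⁺`, where `G'' = f G` is again ε-free. -/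
theorem total_reduces_to_alt :
    ∃ f : CFG → CFG, Computable f ∧
      ∀ G : CFG, EpsFree G → (EpsFree (f G) ∧
        (Lang G = { w : List Bool | w ≠ [] } ↔ AltLang ⊆ Lang (f G))) :=
  ⟨AltReduction.altGrammar, AltReduction.computable_altGrammar, fun _ hG =>
    ⟨AltReduction.epsFree_altGrammar hG, AltReduction.lang_eq_ne_nil_iff_altLang_subset hG⟩⟩
end

section
/- Let B, C, H be Lambek types without the ⁺ connective and let E = (B⁺ · C⁺)⁺. Then the sequent E → H is derivable in L⁺_ω if and only if for all positive natural numbers n, m₁, …, mₙ, k₁, …, kₙ the sequent B^{m₁}, C^{k₁}, …, B^{mₙ}, C^{kₙ} → H (where B^m denotes m consecutive copies of B) is derivable in the Lambek calculus L. -/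
/-!
Call a list of `⁺`-free types an unfolding of a type built by `·` and `⁺` over `⁺`-free types
if it arises by reading each product as a concatenation and each `A⁺` as a nonempty
concatenation of unfoldings of `A`. By induction on the well-founded, ω-branching
L⁺_ω-derivation, every unfolding of the antecedent of a derivable sequent with `⁺`-free
succedent is L-derivable: at the ω-rule one picks the premise whose number of copies matches
the number of blocks in the unfolding. The unfoldings of `(B⁺ · C⁺)⁺` are exactly the
sequences `B^{m₁}, C^{k₁}, …, B^{mₙ}, C^{kₙ}`. Conversely, `(·→)` and the ω-rule reduce
`(B⁺ · C⁺)⁺ → H` to exactly these sequents.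
-/

theorem not_plusFree_plus (A : Fm) : ¬ PlusFree (Fm.plus A) := id

inductive Unfolds : Fm → List Fm → Prop where
  | plusFree {A : Fm} (h : PlusFree A) : Unfolds A [A]
  | mul {A B : Fm} {l₁ l₂ : List Fm} : Unfolds A l₁ → Unfolds B l₂ →
      Unfolds (Fm.mul A B) (l₁ ++ l₂)
  | plus {A : Fm} (ls : List (List Fm)) (hne : ls ≠ []) (h : ∀ l ∈ ls, Unfolds A l) :
      Unfolds (Fm.plus A) ls.flatten

inductive UnfoldsList : List Fm → List Fm → Prop where
  | nil : UnfoldsList [] []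
  | cons {A : Fm} {Γ l E : List Fm} : Unfolds A l → UnfoldsList Γ E →
      UnfoldsList (A :: Γ) (l ++ E)

namespace Unfolds

theorem ne_nil {A : Fm} {l : List Fm} (h : Unfolds A l) : l ≠ [] := by
  induction h with
  | plusFree => simp
  | mul _ _ ih₁ _ => simp [ih₁]
  | plus ls hne _ ih =>
    obtain ⟨l, hl⟩ := List.exists_mem_of_ne_nil ls hne
    exact List.flatten_ne_nil_iff.mpr ⟨l, hl, ih l hl⟩

theorem derL {A : Fm} {l : List Fm} (hA : PlusFree A) (h : Unfolds A l) : DerL l A := by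
  induction h with
  | plusFree => exact DerL.ax _
  | mul _ _ ih₁ ih₂ => exact DerL.mul_r (ih₁ hA.1) (ih₂ hA.2)
  | plus => exact absurd hA (not_plusFree_plus _)

theorem plus_replicate {A : Fm} (hA : PlusFree A) {n : ℕ} (hn : 1 ≤ n) :
    Unfolds (Fm.plus A) (List.replicate n A) := by
  have h := Unfolds.plus (List.replicate n [A]) (by simpa using Nat.pos_iff_ne_zero.mp hn) fun l hl =>
    List.eq_of_mem_replicate hl ▸ Unfolds.plusFree hA
  rwa [List.flatten_replicate_singleton] at h

end Unfolds

namespace UnfoldsList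

theorem singleton {A : Fm} {l : List Fm} (h : Unfolds A l) : UnfoldsList [A] l := by
  simpa using UnfoldsList.cons h .nil

theorem singleton_inv {A : Fm} {E : List Fm} (h : UnfoldsList [A] E) : Unfolds A E := by
  cases h with
  | cons hl hE => cases hE; simpa using hl

theorem ne_nil {Γ E : List Fm} (h : UnfoldsList Γ E) (hΓ : Γ ≠ []) : E ≠ [] := by
  cases h with
  | nil => exact absurd rfl hΓ
  | cons hl _ => simp [hl.ne_nil]

theorem append {Γ Δ E₁ E₂ : List Fm} (h₁ : UnfoldsList Γ E₁) (h₂ : UnfoldsList Δ E₂) :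
    UnfoldsList (Γ ++ Δ) (E₁ ++ E₂) := by
  induction h₁ with
  | nil => simpa
  | cons hl _ ih => simpa using UnfoldsList.cons hl ih

theorem append_cons {Γ Δ EΓ l EΔ : List Fm} {A : Fm} (hΓ : UnfoldsList Γ EΓ)
    (hA : Unfolds A l) (hΔ : UnfoldsList Δ EΔ) :
    UnfoldsList (Γ ++ A :: Δ) (EΓ ++ l ++ EΔ) := by
  simpa using hΓ.append (.cons hA hΔ)

theorem of_append {Γ Δ E : List Fm} (h : UnfoldsList (Γ ++ Δ) E) :
    ∃ E₁ E₂, E = E₁ ++ E₂ ∧ UnfoldsList Γ E₁ ∧ UnfoldsList Δ E₂ := by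
  induction Γ generalizing E with
  | nil => exact ⟨[], E, rfl, .nil, h⟩
  | cons A Γ ih =>
    cases h with
    | cons hl hE =>
      obtain ⟨E₁, E₂, rfl, h₁, h₂⟩ := ih hE
      exact ⟨_ ++ E₁, E₂, by rw [List.append_assoc], .cons hl h₁, h₂⟩

theorem of_append_cons {Γ Δ E : List Fm} {A : Fm} (h : UnfoldsList (Γ ++ A :: Δ) E) :
    ∃ EΓ l EΔ, E = EΓ ++ l ++ EΔ ∧ UnfoldsList Γ EΓ ∧ Unfolds A l ∧ UnfoldsList Δ EΔ := by
  obtain ⟨EΓ, E', rfl, hΓ, hE'⟩ := of_append h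
  cases hE' with
  | cons hA hΔ => exact ⟨EΓ, _, _, (List.append_assoc ..).symm, hΓ, hA, hΔ⟩

theorem replicate {A : Fm} (ls : List (List Fm)) (h : ∀ l ∈ ls, Unfolds A l) :
    UnfoldsList (List.replicate ls.length A) ls.flatten := by
  induction ls with
  | nil => exact .nil
  | cons l ls ih =>
    exact .cons (h l (by simp)) (ih fun l' hl' => h l' (by simp [hl']))

end UnfoldsList

theorem DerL.derLw {Γ : List Fm} {A : Fm} (h : DerL Γ A) : DerLw Γ A := by
  induction h with
  | ax A => exact .ax A
  | ldiv_r hne _ ih => exact .ldiv_r hne ih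
  | ldiv_l _ _ ih₁ ih₂ => exact .ldiv_l ih₁ ih₂
  | rdiv_r hne _ ih => exact .rdiv_r hne ih
  | rdiv_l _ _ ih₁ ih₂ => exact .rdiv_l ih₁ ih₂
  | mul_r _ _ ih₁ ih₂ => exact .mul_r ih₁ ih₂
  | mul_l _ ih => exact .mul_l ih

theorem DerLw.derL_of_unfoldsList {Γ : List Fm} {C : Fm} (h : DerLw Γ C) (hC : PlusFree C)
    {E : List Fm} (hE : UnfoldsList Γ E) : DerL E C := by
  induction h generalizing E with
  | ax A => exact (UnfoldsList.singleton_inv hE).derL hC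
  | ldiv_r hne _ ih =>
    exact .ldiv_r (hE.ne_nil hne) (ih hC.2 (.cons (.plusFree hC.1) hE))
  | rdiv_r hne _ ih =>
    refine .rdiv_r (hE.ne_nil hne) (ih hC.1 ?_)
    simpa using hE.append (.singleton (.plusFree hC.2))
  | mul_r _ _ ih₁ ih₂ =>
    obtain ⟨E₁, E₂, rfl, h₁, h₂⟩ := UnfoldsList.of_append hE
    exact .mul_r (ih₁ hC.1 h₁) (ih₂ hC.2 h₂)
  | plus_r => exact absurd hC (not_plusFree_plus _)
  | ldiv_l _ _ ih₁ ih₂ =>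
    obtain ⟨EΓ, l, EΔ, rfl, hΓ, hl, hΔ⟩ := UnfoldsList.of_append_cons hE
    obtain ⟨EΓ, EP, rfl, hΓ, hP⟩ := UnfoldsList.of_append hΓ
    cases hl with
    | plusFree hAB =>
      have hB := ih₂ hC (hΓ.append_cons (.plusFree hAB.2) hΔ)
      rw [List.append_assoc, List.singleton_append] at hB
      simpa using DerL.ldiv_l (ih₁ hAB.1 hP) hB
  | rdiv_l _ _ ih₁ ih₂ =>
    obtain ⟨EΓ, l, E', rfl, hΓ, hl, hE'⟩ := UnfoldsList.of_append_cons hE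
    obtain ⟨EP, EΔ, rfl, hP, hΔ⟩ := UnfoldsList.of_append hE'
    cases hl with
    | plusFree hBA =>
      have hB := ih₂ hC (hΓ.append_cons (.plusFree hBA.1) hΔ)
      rw [List.append_assoc, List.singleton_append] at hB
      simpa using DerL.rdiv_l (ih₁ hBA.2 hP) hB
  | mul_l _ ih =>
    obtain ⟨EΓ, l, EΔ, rfl, hΓ, hl, hΔ⟩ := UnfoldsList.of_append_cons hE
    cases hl with
    | plusFree hAB =>
      have hsplit := ih hC (hΓ.append_cons (.plusFree hAB.1) (.cons (.plusFree hAB.2) hΔ))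
      simpa using DerL.mul_l (by simpa using hsplit)
    | mul h₁ h₂ =>
      simpa using ih hC (hΓ.append_cons h₁ (.cons h₂ hΔ))
  | plus_l _ ih =>
    obtain ⟨EΓ, l, EΔ, rfl, hΓ, hl, hΔ⟩ := UnfoldsList.of_append_cons hE
    cases hl with
    | plusFree hA => exact absurd hA (not_plusFree_plus _)
    | plus ls hne hls =>
      have hn : 1 ≤ ls.length := List.length_pos_iff.mpr hne
      simpa using ih ls.length hn hC ((hΓ.append (.replicate ls hls)).append hΔ)

theorem DerLw.mul_plus_plus_l {Γ Δ : List Fm} {A B C : Fm}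
    (h : ∀ m k, 1 ≤ m → 1 ≤ k →
      DerLw (Γ ++ List.replicate m A ++ List.replicate k B ++ Δ) C) :
    DerLw (Γ ++ Fm.mul (Fm.plus A) (Fm.plus B) :: Δ) C := by
  refine .mul_l (.plus_l (Γ := Γ) fun m hm => ?_)
  simpa using DerLw.plus_l (Γ := Γ ++ List.replicate m A) (Δ := Δ) fun k hk => h m k hm hk

def blockSeq (B C : Fm) (l : List (ℕ × ℕ)) : List Fm :=
  (l.map fun p => List.replicate p.1 B ++ List.replicate p.2 C).flatten

theorem Unfolds.blockSeq {B C : Fm} (hB : PlusFree B) (hC : PlusFree C)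
    {l : List (ℕ × ℕ)} (hne : l ≠ []) (hl : ∀ p ∈ l, 1 ≤ p.1 ∧ 1 ≤ p.2) :
    Unfolds (Fm.plus (Fm.mul (Fm.plus B) (Fm.plus C))) (blockSeq B C l) := by
  refine .plus _ (by simpa using hne) fun x hx => ?_
  obtain ⟨p, hp, rfl⟩ := List.mem_map.mp hx
  exact .mul (.plus_replicate hB (hl p hp).1) (.plus_replicate hC (hl p hp).2)

theorem derLw_blockSeq_append_replicate {B C H : Fm}
    (hL : ∀ l : List (ℕ × ℕ), l ≠ [] → (∀ p ∈ l, 1 ≤ p.1 ∧ 1 ≤ p.2) →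
      DerL (blockSeq B C l) H)
    (n : ℕ) {l : List (ℕ × ℕ)} (hl : ∀ p ∈ l, 1 ≤ p.1 ∧ 1 ≤ p.2) (hne : l ≠ [] ∨ n ≠ 0) :
    DerLw (blockSeq B C l ++ List.replicate n (Fm.mul (Fm.plus B) (Fm.plus C))) H := by
  induction n generalizing l with
  | zero => simpa using (hL l (by simpa using hne) hl).derLw
  | succ n ih =>
    refine .mul_plus_plus_l fun m k hm hk => ?_
    have hl' : ∀ p ∈ l ++ [(m, k)], 1 ≤ p.1 ∧ 1 ≤ p.2 :=
      List.forall_mem_append.mpr ⟨hl, by simpa using ⟨hm, hk⟩⟩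
    simpa [blockSeq] using ih hl' (.inl (by simp))

/-- Let `B, C, H` be types without `⁺` and `E = (B⁺ · C⁺)⁺`.  Then `E → H` is
derivable in L⁺_ω iff for all `n ≥ 1` and positive `m₁, …, mₙ, k₁, …, kₙ` the
sequent `B^{m₁}, C^{k₁}, …, B^{mₙ}, C^{kₙ} → H` is derivable in the Lambek
calculus L (the list `l` of pairs `(mᵢ, kᵢ)` ranges over all non-empty lists
of pairs of positive numbers). -/
theorem iterated_product_sequent_iff (B C H : Fm)
    (hB : PlusFree B) (hC : PlusFree C) (hH : PlusFree H) :
    DerLw [Fm.plus (Fm.mul (Fm.plus B) (Fm.plus C))] H ↔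
      ∀ l : List (ℕ × ℕ), l ≠ [] → (∀ p ∈ l, 1 ≤ p.1 ∧ 1 ≤ p.2) →
        DerL ((l.map fun p =>
          List.replicate p.1 B ++ List.replicate p.2 C).flatten) H := by
  refine ⟨fun h l hne hl => h.derL_of_unfoldsList hH (.singleton (.blockSeq hB hC hne hl)),
    fun hL => ?_⟩
  have hE := DerLw.plus_l (Γ := []) (Δ := []) fun n hn => by
    simpa [blockSeq] using
      derLw_blockSeq_append_replicate hL n (l := []) (by simp) (.inr (by omega))
  simpa using hE
end
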